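/- Let m ≥ 2 be divisible by an odd prime p. Then the power graph of the dicyclic group Q_{4m} is not isomorphic to the commuting graph of the dihedral group D_{2·2m}: the power graph of Q_{4m} has strictly fewer edges than the commuting graph of D_{2·2m}, which has exactly m(2m - 1) + 5m edges. -/

import Mathlib

/-- The power graph of a group: distinct `x`, `y` are adjacent iff one is a power of the other. -/
def powerGraph (G : Type*) [Group G] : SimpleGraph G where
  Adj x y := x ≠ y ∧ ((∃ k : ℤ, x = y ^ k) ∨ (∃ k : ℤ, y = x ^ k))
  symm := by
    constructor; rintro x y ⟨hne, h | h⟩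
    · exact ⟨hne.symm, Or.inr h⟩
    · exact ⟨hne.symm, Or.inl h⟩
  loopless := by constructor; rintro x ⟨hne, -⟩; exact hne rfl

/-- The commuting graph of a group: distinct `x`, `y` are adjacent iff they commute. -/
def commutingGraph (G : Type*) [Group G] : SimpleGraph G where
  Adj x y := x ≠ y ∧ x * y = y * x
  symm := by constructor; rintro x y ⟨hne, h⟩; exact ⟨hne.symm, h.symm⟩
  loopless := by constructor; rintro x ⟨hne, -⟩; exact hne rfl

/-- The enhanced power graph of a group: distinct `x`, `y` are adjacent iff `⟨x, y⟩` is cyclic. -/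
def enhancedPowerGraph (G : Type*) [Group G] : SimpleGraph G where
  Adj x y := x ≠ y ∧ IsCyclic ↥(Subgroup.closure {x, y})
  symm := by constructor; rintro x y ⟨hne, h⟩; rw [Set.pair_comm] at h; exact ⟨hne.symm, h⟩
  loopless := by constructor; rintro x ⟨hne, -⟩; exact hne rfl

/-!
Every edge of the power graph is an edge of the commuting graph. In `Q_{4m}` with `p ∣ m`, the
element `g = a 1 ^ (m / p)` has order `2p`; then `g ^ 2` (of order `p`) and `g ^ p` (of order `2`)
commute, but neither is a power of the other because neither order divides the other. Hence
`Pow(Q_{4m})` has strictly fewer edges than `Com(Q_{4m})`.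

The bijection `a i ↦ r i`, `xa i ↦ sr i` preserves commutation, so
`Com(Q_{4m}) ≅ Com(D_{2·2m})`. In any finite group `2 |E(Com G)| + |G|` is the number of
commuting pairs; in `D_{2n}` these are counted block by block (rotations/reflections) through the
solutions of `2 i = 0` in `ℤ/n`, of which there are two when `n = 2m`.
-/

open Finset DihedralGroup QuaternionGroup

lemma SimpleGraph.card_edgeSet_lt_card_edgeSet {V : Type*} [Finite V] {G₁ G₂ : SimpleGraph V}
    (h : G₁ < G₂) : Nat.card G₁.edgeSet < Nat.card G₂.edgeSet := by
  rw [Nat.card_coe_set_eq, Nat.card_coe_set_eq]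
  exact Set.ncard_lt_ncard (edgeSet_ssubset_edgeSet.2 h) (Set.toFinite _)

lemma ZMod.two_mul_eq_zero_iff {m : ℕ} [NeZero m] (j : ZMod (2 * m)) :
    2 * j = 0 ↔ j = 0 ∨ j = m := by
  have hm : (m : ZMod (2 * m)).val = m := ZMod.val_natCast_of_lt (lt_two_mul_self (NeZero.pos m))
  have h2 : 2 * j = ((2 * j.val : ℕ) : ZMod (2 * m)) := by push_cast; rw [ZMod.natCast_zmod_val]
  rw [h2, ZMod.natCast_eq_zero_iff, Nat.mul_dvd_mul_iff_left two_pos, ← ZMod.val_eq_zero,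
    ← (ZMod.val_injective _).eq_iff, hm]
  constructor
  · rintro ⟨c, hc⟩
    have : c < 2 := by nlinarith [j.val_lt]
    interval_cases c <;> simp [hc]
  · rintro (h | h) <;> simp [h]

lemma ZMod.card_two_mul_eq_zero {m : ℕ} [NeZero m] : #{j : ZMod (2 * m) | 2 * j = 0} = 2 := by
  have hm : (0 : ZMod (2 * m)) ≠ m := fun h =>
    Nat.not_dvd_of_pos_of_lt (NeZero.pos m) (lt_two_mul_self (NeZero.pos m))
      ((ZMod.natCast_eq_zero_iff _ _).1 h.symm)
  rw [show ({j | 2 * j = 0} : Finset (ZMod (2 * m))) = {0, (m : ZMod (2 * m))} by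
    ext; simp [two_mul_eq_zero_iff], card_pair hm]

section General

variable {G : Type*} [Group G]

lemma powerGraph_le_commutingGraph : powerGraph G ≤ commutingGraph G := by
  rintro x y ⟨hne, ⟨k, rfl⟩ | ⟨k, rfl⟩⟩
  · exact ⟨hne, (Commute.zpow_self y k).eq⟩
  · exact ⟨hne, (Commute.self_zpow x k).eq⟩

lemma orderOf_dvd_or_dvd_of_powerGraph_adj {x y : G} (h : (powerGraph G).Adj x y) :
    orderOf x ∣ orderOf y ∨ orderOf y ∣ orderOf x := by
  obtain ⟨-, ⟨k, rfl⟩ | ⟨k, rfl⟩⟩ := h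
  · exact Or.inl (orderOf_dvd_of_mem_zpowers ⟨k, rfl⟩)
  · exact Or.inr (orderOf_dvd_of_mem_zpowers ⟨k, rfl⟩)

lemma powerGraph_lt_commutingGraph_of_orderOf_eq {g : G} {k : ℕ} (hk : Odd k) (hk1 : k ≠ 1)
    (hg : orderOf g = 2 * k) : powerGraph G < commutingGraph G := by
  have hx : orderOf (g ^ 2) = k := by
    rw [orderOf_pow_of_dvd two_ne_zero (by simp [hg]), hg, Nat.mul_div_cancel_left k two_pos]
  have hy : orderOf (g ^ k) = 2 := by
    rw [orderOf_pow_of_dvd hk.pos.ne' (by simp [hg]), hg, Nat.mul_div_cancel _ hk.pos]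
  have hne : g ^ 2 ≠ g ^ k := fun h => by
    have hk2 : k = 2 := hx.symm.trans ((congrArg orderOf h).trans hy)
    exact absurd (hk2 ▸ hk) (by decide)
  refine powerGraph_le_commutingGraph.lt_of_ne fun h => ?_
  have hadj : (powerGraph G).Adj (g ^ 2) (g ^ k) := h ▸ ⟨hne, (Commute.pow_pow_self g 2 k).eq⟩
  rcases orderOf_dvd_or_dvd_of_powerGraph_adj hadj with hd | hd <;> rw [hx, hy] at hd
  · rcases (Nat.dvd_prime Nat.prime_two).1 hd with rfl | rfl
    · exact hk1 rfl
    · exact absurd hk (by decide)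
  · exact hk.not_two_dvd_nat hd

def commutingGraphCongr {H : Type*} [Group H] (e : G ≃ H)
    (he : ∀ x y, Commute (e x) (e y) ↔ Commute x y) :
    commutingGraph G ≃g commutingGraph H where
  toEquiv := e
  map_rel_iff' := and_congr e.injective.ne_iff (he _ _)

lemma card_commute_eq_two_mul_card_edgeSet_add_card [Finite G] :
    Nat.card {p : G × G // Commute p.1 p.2} =
      2 * Nat.card (commutingGraph G).edgeSet + Nat.card G := by
  classical
  have := Fintype.ofFinite G
  have hdeg (x : G) : Fintype.card {y // Commute x y} = (commutingGraph G).degree x + 1 := by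
    have : (commutingGraph G).neighborFinset x = ({y | Commute x y} : Finset G).erase x := by
      ext y
      simp only [SimpleGraph.mem_neighborFinset, mem_erase, mem_filter_univ]
      exact and_congr ne_comm Iff.rfl
    rw [SimpleGraph.degree, this, card_erase_add_one (by simp), Fintype.card_subtype]
  rw [Nat.card_congr (Equiv.subtypeProdEquivSigmaSubtype Commute), Nat.card_eq_fintype_card,
    Fintype.card_sigma]
  simp only [hdeg, sum_add_distrib, SimpleGraph.sum_degrees_eq_twice_card_edges]
  simp [Nat.card_eq_fintype_card, SimpleGraph.edgeFinset_card]

end General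

namespace DihedralGroup

variable {n : ℕ}

lemma commute_r_r (i j : ZMod n) : Commute (r i) (r j) := by
  rw [Commute, SemiconjBy, r_mul_r, r_mul_r, add_comm]

lemma commute_r_sr_iff (i j : ZMod n) : Commute (r i) (sr j) ↔ 2 * i = 0 := by
  rw [Commute, SemiconjBy, r_mul_sr, sr_mul_r, sr.injEq]
  constructor <;> intro h <;> linear_combination -h

lemma commute_sr_r_iff (i j : ZMod n) : Commute (sr i) (r j) ↔ 2 * j = 0 :=
  Commute.symm_iff.trans (commute_r_sr_iff j i)

lemma commute_sr_sr_iff (i j : ZMod n) : Commute (sr i) (sr j) ↔ 2 * (i - j) = 0 := by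
  rw [Commute, SemiconjBy, sr_mul_sr, sr_mul_sr, r.injEq]
  constructor <;> intro h <;> linear_combination -h

lemma sum_univ {M : Type*} [AddCommMonoid M] [NeZero n] (f : DihedralGroup n → M) :
    ∑ x, f x = ∑ i, f (r i) + ∑ i, f (sr i) := by
  rw [← equivSum.symm.sum_comp, Fintype.sum_sum_type]
  rfl

lemma card_commute [NeZero n] :
    Nat.card {p : DihedralGroup n × DihedralGroup n // Commute p.1 p.2} =
      n * (n + 3 * #{i : ZMod n | 2 * i = 0}) := by
  classical
  have hrow : ∑ i : ZMod n, ∑ _j : ZMod n, (if 2 * i = 0 then 1 else 0) =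
      n * #{i : ZMod n | 2 * i = 0} := by
    rw [sum_comm]
    simp
  have hshift (i : ZMod n) :
      ∑ j : ZMod n, (if 2 * (i - j) = 0 then 1 else 0) = #{k : ZMod n | 2 * k = 0} := by
    rw [card_filter]
    exact (Equiv.subLeft i).sum_comp fun k => if 2 * k = 0 then 1 else 0
  rw [Nat.card_eq_fintype_card, Fintype.card_subtype, card_filter, Fintype.sum_prod_type]
  simp only [sum_univ, sum_add_distrib, commute_r_r, commute_r_sr_iff, commute_sr_r_iff,
    commute_sr_sr_iff, if_true]
  rw [hrow]
  simp only [hshift, sum_boole, Nat.cast_id, sum_const, card_univ, ZMod.card, smul_eq_mul, mul_one]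
  ring

end DihedralGroup

lemma card_edgeSet_commutingGraph_dihedralGroup (m : ℕ) [NeZero m] :
    Nat.card (commutingGraph (DihedralGroup (2 * m))).edgeSet = m * (2 * m - 1) + 5 * m := by
  have h := card_commute_eq_two_mul_card_edgeSet_add_card (G := DihedralGroup (2 * m))
  rw [DihedralGroup.card_commute, ZMod.card_two_mul_eq_zero, DihedralGroup.nat_card] at h
  zify [show 1 ≤ 2 * m by have := NeZero.pos m; omega] at h ⊢
  linarith

namespace QuaternionGroup

variable {n : ℕ}

/-- Not a group isomorphism (`xa i ^ 2 = a n` but `sr i ^ 2 = 1`), yet it preserves commutation. -/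
def equivDihedralGroup (n : ℕ) : QuaternionGroup n ≃ DihedralGroup (2 * n) where
  toFun
    | a i => r i
    | xa i => sr i
  invFun
    | r i => a i
    | sr i => xa i
  left_inv := by rintro (i | i) <;> rfl
  right_inv := by rintro (i | i) <;> rfl

lemma commute_equivDihedralGroup_iff (x y : QuaternionGroup n) :
    Commute (equivDihedralGroup n x) (equivDihedralGroup n y) ↔ Commute x y := by
  rcases x with i | i <;> rcases y with j | j <;>
    simp [equivDihedralGroup, Commute, SemiconjBy, add_sub_assoc]

lemma powerGraph_lt_commutingGraph [NeZero n] {p : ℕ} (hodd : Odd p) (hp : p ≠ 1)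
    (hdvd : p ∣ n) :
    powerGraph (QuaternionGroup n) < commutingGraph (QuaternionGroup n) := by
  obtain ⟨t, rfl⟩ := hdvd
  have ht : t ≠ 0 := right_ne_zero_of_mul (NeZero.ne (p * t))
  refine powerGraph_lt_commutingGraph_of_orderOf_eq (g := a 1 ^ t) hodd hp ?_
  have ht_dvd : t ∣ orderOf (a 1 : QuaternionGroup (p * t)) := by
    rw [orderOf_a_one]
    exact (dvd_mul_left t p).mul_left 2
  rw [orderOf_pow_of_dvd ht ht_dvd, orderOf_a_one, ← mul_assoc,
    Nat.mul_div_cancel _ (Nat.pos_of_ne_zero ht)]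

end QuaternionGroup

/-- If an odd prime divides m (m ≥ 2), then the power graph of `Q_{4m}` has strictly fewer
edges than the commuting graph of `D_{2·2m}` (which has `m(2m-1) + 5m` edges), so the two
graphs are not isomorphic. -/
theorem stmt16 (m : ℕ) (hm : 2 ≤ m) (p : ℕ) (hp : p.Prime) (hodd : Odd p) (hdvd : p ∣ m) :
    Nat.card (powerGraph (QuaternionGroup m)).edgeSet < m * (2 * m - 1) + 5 * m ∧
      Nat.card (commutingGraph (DihedralGroup (2 * m))).edgeSet = m * (2 * m - 1) + 5 * m ∧
      ¬ Nonempty (powerGraph (QuaternionGroup m) ≃g commutingGraph (DihedralGroup (2 * m))) := by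
  have : NeZero m := ⟨by omega⟩
  have hD := card_edgeSet_commutingGraph_dihedralGroup m
  have hQD : Nat.card (commutingGraph (QuaternionGroup m)).edgeSet =
      Nat.card (commutingGraph (DihedralGroup (2 * m))).edgeSet :=
    Nat.card_congr (commutingGraphCongr _ commute_equivDihedralGroup_iff).mapEdgeSet
  have hlt := SimpleGraph.card_edgeSet_lt_card_edgeSet
    (QuaternionGroup.powerGraph_lt_commutingGraph hodd hp.ne_one hdvd)
  refine ⟨hlt.trans_eq (hQD.trans hD), hD, fun ⟨e⟩ => ?_⟩
  have := Nat.card_congr e.mapEdgeSet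
  omega
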